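/- arXiv:2512.10032 — 7 statements merged into one kernel-verified Lean document; each statement's English description precedes it below -/
import Mathlib

section
/- (Pairwise characterization of C-DAGs.) Let V be a finite set, C = {C_1, …, C_r} a partition of V, and G_C a directed graph on vertex set C with no directed cycle and no self-loops. A DAG G over V is compatible with G_C (i.e., the cluster graph induced by G on the partition C equals G_C) if and only if all of the following hold: (1) for every edge C_i → C_j of G_C, no Y ∈ C_j is an ancestor in G of any X ∈ C_i, and there exist X ∈ C_i, Y ∈ C_j with a directed edge X → Y in G; (2) for every pair such that C_i is an ancestor of C_j in G_C but C_i → C_j is not an edge of G_C, no Y ∈ C_j is an ancestor in G of any X ∈ C_i and there is no directed edge X → Y in G with X ∈ C_i, Y ∈ C_j; (3) for every pair of distinct clusters C_i, C_j such that in G_C neither is an ancestor of the other, no X ∈ C_i is an ancestor in G of any Y ∈ C_j and no Y ∈ C_j is an ancestor in G of any X ∈ C_i. -/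
/-- A directed mixed graph over a vertex type `V`: a set of directed edges and a
symmetric set of bidirected edges between distinct vertices. -/
structure DMG (V : Type) where
  dir : V → V → Prop
  bidir : V → V → Prop
  bidir_symm : ∀ x y, bidir x y → bidir y x
  dir_ne : ∀ x y, dir x y → x ≠ y
  bidir_ne : ∀ x y, bidir x y → x ≠ y

namespace DMG

variable {V : Type} {I : Type}

/-- `X` is an ancestor of `Y`: there is a directed path of length ≥ 1 from `X` to `Y`. -/
def Anc (G : DMG V) : V → V → Prop := Relation.TransGen G.dir

/-- No directed cycles. -/
def Acyclic (G : DMG V) : Prop := ∀ x, ¬ G.Anc x x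

/-- No bidirected edges. -/
def NoBidir (G : DMG V) : Prop := ∀ x y, ¬ G.bidir x y

/-- A DAG: no bidirected edges and no directed cycles. -/
def IsDAG (G : DMG V) : Prop := G.Acyclic ∧ G.NoBidir

/-- Two vertices are adjacent if joined by a directed or bidirected edge. -/
def Adj (G : DMG V) (x y : V) : Prop := G.dir x y ∨ G.dir y x ∨ G.bidir x y

/-- Ancestral graph: no directed cycle, no almost directed cycle. -/
def Ancestral (G : DMG V) : Prop :=
  G.Acyclic ∧ ∀ x y, G.bidir x y → ¬ G.Anc x y

/-- The cluster graph induced by `G` on the partition of `V` into the fibers of `π`. -/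
def clusterGraph (G : DMG V) (π : V → I) : DMG I where
  dir i j := i ≠ j ∧ ∃ x y, π x = i ∧ π y = j ∧ G.dir x y
  bidir i j := i ≠ j ∧ ∃ x y, π x = i ∧ π y = j ∧ G.bidir x y
  bidir_symm := by
    rintro i j ⟨hne, x, y, hx, hy, hb⟩
    exact ⟨hne.symm, y, x, hy, hx, G.bidir_symm _ _ hb⟩
  dir_ne := fun _ _ h => h.1
  bidir_ne := fun _ _ h => h.1

/-- `G` is compatible with the cluster graph `GC` (over the partition given by the
fibers of `π`) if the cluster graph induced by `G` equals `GC`. -/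
def CompatibleWith (G : DMG V) (π : V → I) (GC : DMG I) : Prop :=
  (∀ i j, GC.dir i j ↔ (G.clusterGraph π).dir i j) ∧
  (∀ i j, GC.bidir i j ↔ (G.clusterGraph π).bidir i j)

/-- Walks in a directed mixed graph: each consecutive pair of vertices is joined
by a directed edge (in either direction) or a bidirected edge, and we remember
which edge is used. -/
inductive Walk (G : DMG V) : V → V → Type
  | nil (x : V) : Walk G x x
  | fwd {x y z : V} (h : G.dir x y) (w : Walk G y z) : Walk G x z
  | bwd {x y z : V} (h : G.dir y x) (w : Walk G y z) : Walk G x z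
  | bi  {x y z : V} (h : G.bidir x y) (w : Walk G y z) : Walk G x z

namespace Walk

variable {G : DMG V}

/-- The list of vertices visited by a walk. -/
def support : {x y : V} → Walk G x y → List V
  | _, _, .nil x => [x]
  | _, _, .fwd (x := x) _ w => x :: w.support
  | _, _, .bwd (x := x) _ w => x :: w.support
  | _, _, .bi (x := x) _ w => x :: w.support

/-- Whether a walk is trivial. -/
def isNil : {x y : V} → Walk G x y → Bool
  | _, _, .nil _ => true
  | _, _, .fwd _ _ => false
  | _, _, .bwd _ _ => false
  | _, _, .bi _ _ => false

/-- Whether the first edge of the walk has an arrowhead at the first vertex. -/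
def headAtStart : {x y : V} → Walk G x y → Bool
  | _, _, .nil _ => false
  | _, _, .fwd _ _ => false
  | _, _, .bwd _ _ => true
  | _, _, .bi _ _ => true

/-- The internal (non-endpoint) vertices of a walk, each paired with a Boolean
recording whether it is a collider on the walk (both incident edges of the walk
have an arrowhead at it). -/
def marked : {x y : V} → Walk G x y → List (V × Bool)
  | _, _, .nil _ => []
  | _, _, .fwd (y := y) _ w => (if w.isNil then [] else [(y, w.headAtStart)]) ++ w.marked
  | _, _, .bwd (y := y) _ w => (if w.isNil then [] else [(y, false)]) ++ w.marked
  | _, _, .bi (y := y) _ w => (if w.isNil then [] else [(y, w.headAtStart)]) ++ w.marked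

/-- A walk is a path if its vertices are pairwise distinct. -/
def IsPath {x y : V} (w : Walk G x y) : Prop := w.support.Nodup

/-- A walk is blocked by `S` if it contains a non-collider belonging to `S`, or a
collider such that neither the collider nor any of its descendants belongs to `S`. -/
def Blocked {x y : V} (w : Walk G x y) (S : Set V) : Prop :=
  ∃ p ∈ w.marked,
    (p.2 = false ∧ p.1 ∈ S) ∨
    (p.2 = true ∧ p.1 ∉ S ∧ ∀ d, G.Anc p.1 d → d ∉ S)

end Walk

/-- `x` and `y` are m-separated by `S` in `G`: every path between `x` and `y`
is blocked by `S`.  (In a DAG this is d-separation.) -/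
def MSep (G : DMG V) (x y : V) (S : Set V) : Prop :=
  ∀ w : Walk G x y, w.IsPath → w.Blocked S

/-- Vertex sets `A` and `B` are m-separated by `S`. -/
def MSepSets (G : DMG V) (A B S : Set V) : Prop :=
  ∀ x ∈ A, ∀ y ∈ B, G.MSep x y S

/-- The induced subgraph of `G` on a set `A` of vertices. -/
def induce (G : DMG V) (A : Set V) : DMG A where
  dir x y := G.dir x.1 y.1
  bidir x y := G.bidir x.1 y.1
  bidir_symm := fun _ _ h => G.bidir_symm _ _ h
  dir_ne := fun _ _ h he => G.dir_ne _ _ h (congrArg Subtype.val he)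
  bidir_ne := fun _ _ h he => G.bidir_ne _ _ h (congrArg Subtype.val he)

end DMG

open DMG in
/-- Pairwise characterization of C-DAGs: a DAG `G` is compatible with
a given C-DAG `GC` (directed, acyclic, no self-loops) over the partition given by the
fibers of `π` iff conditions (1)–(3) hold. -/
theorem stmt3 {V I : Type} [Fintype V]
    (π : V → I) (hsurj : Function.Surjective π)
    (GC : DMG I) (hGCacyc : GC.Acyclic) (hGCnb : GC.NoBidir)
    (G : DMG V) (hG : G.IsDAG) :
    G.CompatibleWith π GC ↔
      ((∀ i j, GC.dir i j →
          (∀ x y, π x = i → π y = j → ¬ G.Anc y x) ∧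
          (∃ x y, π x = i ∧ π y = j ∧ G.dir x y)) ∧
       (∀ i j, GC.Anc i j → ¬ GC.dir i j →
          ∀ x y, π x = i → π y = j → ¬ G.Anc y x ∧ ¬ G.dir x y) ∧
       (∀ i j, i ≠ j → ¬ GC.Anc i j → ¬ GC.Anc j i →
          ∀ x y, π x = i → π y = j → ¬ G.Anc x y ∧ ¬ G.Anc y x)) := by
  obtain ⟨hGacyc, hGnb⟩ := hG
  constructor
  · rintro ⟨hd, hb⟩
    have push : ∀ x y, G.Anc x y → Relation.ReflTransGen GC.dir (π x) (π y) := by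
      intro x y h
      induction h with
      | single h =>
        rename_i b
        by_cases he : π x = π b
        · rw [he]
        · exact Relation.ReflTransGen.single ((hd _ _).mpr ⟨he, x, b, rfl, rfl, h⟩)
      | tail h hd2 ih =>
        rename_i b c
        by_cases he : π b = π c
        · rwa [he] at ih
        · exact ih.tail ((hd _ _).mpr ⟨he, b, c, rfl, rfl, hd2⟩)
    refine ⟨fun i j hij => ⟨?_, ?_⟩, fun i j ha hnd x y hx hy => ⟨?_, ?_⟩,
      fun i j hne hna hna' x y hx hy => ⟨?_, ?_⟩⟩
    · intro x y hx hy hanc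
      subst hx; subst hy
      exact hGCacyc _ (Relation.TransGen.head' hij (push _ _ hanc))
    · exact ((hd i j).mp hij).2
    · intro hanc
      subst hx; subst hy
      exact hGCacyc _ (Relation.TransGen.trans_left ha (push _ _ hanc))
    · intro hdir
      subst hx; subst hy
      by_cases he : π x = π y
      · rw [he] at ha; exact hGCacyc _ ha
      · exact hnd ((hd _ _).mpr ⟨he, x, y, rfl, rfl, hdir⟩)
    · intro hanc
      subst hx; subst hy
      rcases Relation.reflTransGen_iff_eq_or_transGen.mp (push _ _ hanc) with h | h
      · exact hne h.symm
      · exact hna h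
    · intro hanc
      subst hx; subst hy
      rcases Relation.reflTransGen_iff_eq_or_transGen.mp (push _ _ hanc) with h | h
      · exact hne h
      · exact hna' h
  · rintro ⟨h1, h2, h3⟩
    constructor
    · intro i j
      constructor
      · intro hij
        exact ⟨GC.dir_ne _ _ hij, (h1 i j hij).2⟩
      · rintro ⟨hne, x, y, hx, hy, hxy⟩
        by_contra hnd
        by_cases ha : GC.Anc i j
        · exact (h2 i j ha hnd x y hx hy).2 hxy
        · by_cases ha' : GC.Anc j i
          · by_cases hd' : GC.dir j i
            · exact (h1 j i hd').1 y x hy hx (Relation.TransGen.single hxy)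
            · exact (h2 j i ha' hd' y x hy hx).1 (Relation.TransGen.single hxy)
          · exact (h3 i j hne ha ha' x y hx hy).1 (Relation.TransGen.single hxy)
    · intro i j
      constructor
      · intro h; exact absurd h (hGCnb i j)
      · rintro ⟨_, x, y, _, _, hb⟩; exact absurd hb (hGnb x y)
end

section
/- (Pairwise characterization of C-ADMGs.) Let V be a finite set, C = {C_1, …, C_r} a partition of V, and G_C a directed mixed graph on vertex set C with no directed cycle and no self-loops. An ADMG G over V is compatible with G_C (i.e., the cluster graph induced by G on the partition C equals G_C) if and only if all of the following hold: (1) for every directed edge C_i → C_j of G_C, no Y ∈ C_j is an ancestor in G of any X ∈ C_i, and there exist X ∈ C_i, Y ∈ C_j with a directed edge X → Y in G; (2) for every pair such that C_i is an ancestor of C_j in G_C but C_i → C_j is not an edge of G_C, no Y ∈ C_j is an ancestor in G of any X ∈ C_i and there is no directed edge X → Y in G with X ∈ C_i, Y ∈ C_j; (3) for every pair of distinct clusters such that in G_C neither is an ancestor of the other, no X ∈ C_i is an ancestor in G of any Y ∈ C_j and vice versa; (4) for every pair of distinct clusters, C_i ↔ C_j is a bidirected edge of G_C if and only if there exist X ∈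 C_i, Y ∈ C_j with a bidirected edge X ↔ Y in G. -/
/-!
A directed path of `G` projects, after merging consecutive vertices of the same cluster, onto a
directed path of the induced cluster graph. So under compatibility, `G`-ancestry between different
clusters implies `GC`-ancestry, and acyclicity of `GC` forbids ancestry against its direction;
this gives (1)–(4). Conversely, by (1)–(3) an edge `x → y` of `G` between two clusters can
neither run against nor across the ancestral order of `GC`, and by (2) it cannot join a
non-adjacent ancestor pair, so it lies over an edge of `GC`.
-/

namespace DMG

variable {V I : Type} {G : DMG V} {π : V → I} {GC : DMG I}

theorem Anc.eq_or_clusterGraph_anc {x y : V} (h : G.Anc x y) :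
    π x = π y ∨ (G.clusterGraph π).Anc (π x) (π y) := by
  induction h with
  | @single b hxb =>
    by_cases he : π x = π b
    · exact .inl he
    · exact .inr (.single ⟨he, _, _, rfl, rfl, hxb⟩)
  | @tail b c _ hbc ih =>
    by_cases he : π b = π c
    · exact he ▸ ih
    · have hedge : (G.clusterGraph π).dir (π b) (π c) := ⟨he, _, _, rfl, rfl, hbc⟩
      rcases ih with hxb | hxb
      · exact .inr (hxb ▸ .single hedge)
      · exact .inr (hxb.tail hedge)

namespace CompatibleWith

theorem eq_or_anc (hc : G.CompatibleWith π GC) {x y : V} (h : G.Anc x y) :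
    π x = π y ∨ GC.Anc (π x) (π y) :=
  h.eq_or_clusterGraph_anc.imp_right
    (Relation.TransGen.mono (fun i j hij => (hc.1 i j).mpr hij) _ _)

theorem not_anc_of_anc (hc : G.CompatibleWith π GC) (hGC : GC.Acyclic) {i j : I}
    (hij : GC.Anc i j) {x y : V} (hx : π x = i) (hy : π y = j) : ¬ G.Anc y x := by
  intro hyx
  subst hx hy
  rcases hc.eq_or_anc hyx with he | hji
  · exact hGC _ (he ▸ hij)
  · exact hGC _ (hij.trans hji)

theorem not_anc_of_not_anc (hc : G.CompatibleWith π GC) {i j : I} (hne : i ≠ j)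
    (hij : ¬ GC.Anc i j) {x y : V} (hx : π x = i) (hy : π y = j) : ¬ G.Anc x y := by
  intro hxy
  subst hx hy
  exact (hc.eq_or_anc hxy).elim hne hij

end CompatibleWith

theorem dir_of_pairwise
    (h1 : ∀ i j, GC.dir i j → ∀ x y, π x = i → π y = j → ¬ G.Anc y x)
    (h2 : ∀ i j, GC.Anc i j → ¬ GC.dir i j →
      ∀ x y, π x = i → π y = j → ¬ G.Anc y x ∧ ¬ G.dir x y)
    (h3 : ∀ i j, i ≠ j → ¬ GC.Anc i j → ¬ GC.Anc j i →
      ∀ x y, π x = i → π y = j → ¬ G.Anc x y ∧ ¬ G.Anc y x)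
    {x y : V} (hne : π x ≠ π y) (hxy : G.dir x y) : GC.dir (π x) (π y) := by
  by_contra hnd
  by_cases hij : GC.Anc (π x) (π y)
  · exact (h2 _ _ hij hnd x y rfl rfl).2 hxy
  by_cases hji : GC.Anc (π y) (π x)
  · by_cases hdji : GC.dir (π y) (π x)
    · exact h1 _ _ hdji y x rfl rfl (.single hxy)
    · exact (h2 _ _ hji hdji y x rfl rfl).1 (.single hxy)
  · exact (h3 _ _ hne hij hji x y rfl rfl).1 (.single hxy)

end DMG

open DMG in
theorem stmt4_general {V I : Type}
    (π : V → I)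
    (GC : DMG I) (hGCacyc : GC.Acyclic)
    (G : DMG V) :
    G.CompatibleWith π GC ↔
      ((∀ i j, GC.dir i j →
          (∀ x y, π x = i → π y = j → ¬ G.Anc y x) ∧
          (∃ x y, π x = i ∧ π y = j ∧ G.dir x y)) ∧
       (∀ i j, GC.Anc i j → ¬ GC.dir i j →
          ∀ x y, π x = i → π y = j → ¬ G.Anc y x ∧ ¬ G.dir x y) ∧
       (∀ i j, i ≠ j → ¬ GC.Anc i j → ¬ GC.Anc j i →
          ∀ x y, π x = i → π y = j → ¬ G.Anc x y ∧ ¬ G.Anc y x) ∧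
       (∀ i j, i ≠ j →
          (GC.bidir i j ↔ ∃ x y, π x = i ∧ π y = j ∧ G.bidir x y))) := by
  constructor
  · intro hc
    refine ⟨fun i j hij =>
        ⟨fun x y => hc.not_anc_of_anc hGCacyc (.single hij), ((hc.1 i j).mp hij).2⟩,
      fun i j hij hnd x y hx hy => ⟨hc.not_anc_of_anc hGCacyc hij hx hy, fun hxy =>
        hnd ((hc.1 i j).mpr ⟨fun he => hGCacyc i (he ▸ hij), x, y, hx, hy, hxy⟩)⟩,
      fun i j hne hij hji x y hx hy =>
        ⟨hc.not_anc_of_not_anc hne hij hx hy, hc.not_anc_of_not_anc hne.symm hji hy hx⟩,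
      fun i j hne => (hc.2 i j).trans ⟨And.right, And.intro hne⟩⟩
  · rintro ⟨h1, h2, h3, h4⟩
    refine ⟨fun i j => ⟨fun hij => ⟨GC.dir_ne i j hij, (h1 i j hij).2⟩, ?_⟩,
      fun i j => ⟨fun hij => ⟨GC.bidir_ne i j hij, (h4 i j (GC.bidir_ne i j hij)).mp hij⟩,
        fun ⟨hne, hb⟩ => (h4 i j hne).mpr hb⟩⟩
    rintro ⟨hne, x, y, rfl, rfl, hxy⟩
    exact dir_of_pairwise (fun i j h => (h1 i j h).1) h2 h3 hne hxy

open DMG in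
/-- Pairwise characterization of C-ADMGs: an ADMG `G` is compatible
with a given directed mixed cluster graph `GC` (acyclic, no self-loops) over the
partition given by the fibers of `π` iff conditions (1)–(4) hold. -/
theorem stmt4 {V I : Type} [Fintype V]
    (π : V → I) (hsurj : Function.Surjective π)
    (GC : DMG I) (hGCacyc : GC.Acyclic)
    (G : DMG V) (hG : G.Acyclic) :
    G.CompatibleWith π GC ↔
      ((∀ i j, GC.dir i j →
          (∀ x y, π x = i → π y = j → ¬ G.Anc y x) ∧
          (∃ x y, π x = i ∧ π y = j ∧ G.dir x y)) ∧
       (∀ i j, GC.Anc i j → ¬ GC.dir i j →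
          ∀ x y, π x = i → π y = j → ¬ G.Anc y x ∧ ¬ G.dir x y) ∧
       (∀ i j, i ≠ j → ¬ GC.Anc i j → ¬ GC.Anc j i →
          ∀ x y, π x = i → π y = j → ¬ G.Anc x y ∧ ¬ G.Anc y x) ∧
       (∀ i j, i ≠ j →
          (GC.bidir i j ↔ ∃ x y, π x = i ∧ π y = j ∧ G.bidir x y))) :=
  stmt4_general π GC hGCacyc G
end

section
/- (Soundness of d-separation in C-DAGs.) Let G_C be a C-ADMG over an admissible partition C = {C_1, …, C_r} of a finite set V, and let 𝒳, 𝒴, 𝒵 be pairwise disjoint sets of clusters. If 𝒳 and 𝒴 are m-separated by 𝒵 in the cluster graph G_C, then in every ADMG G over V compatible with G_C, the vertex sets ∪𝒳 and ∪𝒴 are m-separated by ∪𝒵 in G. -/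
/-!
An m-connecting walk in `G` contracts, cluster by cluster, to an m-connecting walk in the cluster
graph, and in an acyclic graph every m-connecting walk can be shortened to an m-connecting path.
Walks rather than paths are needed in the middle because contracting a path may revisit a cluster.
-/

namespace DMG

variable {V : Type} {G : DMG V}

def ancestralClosure (G : DMG V) (S : Set V) : Set V :=
  {v | ∃ d ∈ S, Relation.ReflTransGen G.dir v d}

lemma mem_ancestralClosure_of_anc {S : Set V} {a b : V} (hab : G.Anc a b)
    (hb : b ∈ G.ancestralClosure S) : a ∈ G.ancestralClosure S :=
  let ⟨d, hd, hbd⟩ := hb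
  ⟨d, hd, hab.to_reflTransGen.trans hbd⟩

/-- `v` does not block a walk through it, as a collider (`true`) or a non-collider (`false`). -/
def ActiveAt (G : DMG V) (S : Set V) (v : V) : Bool → Prop
  | true => v ∈ G.ancestralClosure S
  | false => v ∉ S

@[simp] lemma activeAt_true {S : Set V} {v : V} :
    G.ActiveAt S v true ↔ v ∈ G.ancestralClosure S := Iff.rfl

@[simp] lemma activeAt_false {S : Set V} {v : V} : G.ActiveAt S v false ↔ v ∉ S := Iff.rfl

/-- A single step of a walk; `Walk.cons` lets the three constructors of `Walk` be treated
uniformly. -/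
inductive Edge (G : DMG V) (x y : V) : Type
  | fwd (h : G.dir x y)
  | bwd (h : G.dir y x)
  | bi (h : G.bidir x y)

namespace Edge

variable {x y : V}

def headAtSrc : Edge G x y → Bool
  | fwd _ => false
  | bwd _ => true
  | bi _ => true

def headAtTgt : Edge G x y → Bool
  | fwd _ => true
  | bwd _ => false
  | bi _ => true

lemma headAtTgt_eq_true_of_headAtSrc_eq_false (e : Edge G x y) (h : e.headAtSrc = false) :
    e.headAtTgt = true := by
  cases e <;> simp_all [headAtSrc, headAtTgt]

lemma dir_of_headAtSrc_eq_false : ∀ (e : Edge G x y), e.headAtSrc = false → G.dir x y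
  | fwd h, _ => h

end Edge

namespace Walk

variable {S : Set V}

def cons {x y z : V} : Edge G x y → Walk G y z → Walk G x z
  | .fwd h, w => .fwd h w
  | .bwd h, w => .bwd h w
  | .bi h, w => .bi h w

@[elab_as_elim]
theorem induction_cons {motive : ∀ x z : V, Walk G x z → Prop}
    (nil : ∀ x, motive x x (nil x))
    (cons : ∀ {x y z : V} (e : Edge G x y) (w : Walk G y z), motive y z w →
      motive x z (cons e w)) :
    ∀ {x z : V} (w : Walk G x z), motive x z w
  | _, _, .nil x => nil x
  | _, _, .fwd h w => cons (.fwd h) w (induction_cons nil cons w)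
  | _, _, .bwd h w => cons (.bwd h) w (induction_cons nil cons w)
  | _, _, .bi h w => cons (.bi h) w (induction_cons nil cons w)

section Cons

variable {x y z : V} (e : Edge G x y) (w : Walk G y z)

@[simp] lemma support_nil : (nil x : Walk G x x).support = [x] := rfl

@[simp] lemma isNil_nil : (nil x : Walk G x x).isNil = true := rfl

@[simp] lemma marked_nil : (nil x : Walk G x x).marked = [] := rfl

@[simp] lemma support_cons : (cons e w).support = x :: w.support := by cases e <;> rfl

@[simp] lemma isNil_cons : (cons e w).isNil = false := by cases e <;> rfl

@[simp] lemma headAtStart_cons : (cons e w).headAtStart = e.headAtSrc := by cases e <;> rfl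

lemma marked_cons : (cons e w).marked =
    (if w.isNil then [] else [(y, e.headAtTgt && w.headAtStart)]) ++ w.marked := by
  cases e <;> rfl

end Cons

def Active {x z : V} (w : Walk G x z) (S : Set V) : Prop :=
  ∀ p ∈ w.marked, G.ActiveAt S p.1 p.2

/-- The start vertex of `w` would not be blocked if `w` were extended backwards by an edge with
an arrowhead (`arrow = true`) or a tail at it. -/
def ActiveAtStart {x z : V} (w : Walk G x z) (S : Set V) (arrow : Bool) : Prop :=
  w.isNil = false → G.ActiveAt S x (arrow && w.headAtStart)

lemma blocked_iff_not_active {x z : V} (w : Walk G x z) : w.Blocked S ↔ ¬ w.Active S := by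
  simp only [Blocked, Active, not_forall, exists_prop]
  refine exists_congr fun ⟨v, c⟩ => and_congr_right fun _ => ?_
  cases c
  · simp
  · simp only [ActiveAt, ancestralClosure, Set.mem_ofPred_eq,
      Relation.reflTransGen_iff_eq_or_transGen, Bool.true_eq_false, false_and, false_or, true_and,
      not_exists, not_and, not_or]
    constructor
    · rintro ⟨hv, hanc⟩ d hd
      exact ⟨fun h => hv (h ▸ hd), fun hvd => hanc d hvd hd⟩
    · intro h
      exact ⟨fun hv => (h v hv).1 rfl, fun d hvd hd => (h d hd).2 hvd⟩

@[simp] lemma active_nil {x : V} : (nil x : Walk G x x).Active S := by simp [Active]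

@[simp] lemma activeAtStart_nil {x : V} {arrow : Bool} :
    (nil x : Walk G x x).ActiveAtStart S arrow := by
  simp [ActiveAtStart]

@[simp] lemma activeAtStart_cons {x y z : V} (e : Edge G x y) (w : Walk G y z) {arrow : Bool} :
    (cons e w).ActiveAtStart S arrow ↔ G.ActiveAt S x (arrow && e.headAtSrc) := by
  simp [ActiveAtStart]

lemma active_cons_iff {x y z : V} {e : Edge G x y} {w : Walk G y z} :
    (cons e w).Active S ↔ w.ActiveAtStart S e.headAtTgt ∧ w.Active S := by
  cases hw : w.isNil <;> simp [Active, ActiveAtStart, marked_cons, hw]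

lemma exists_suffix_of_mem_support {x y z v : V} (e : Edge G x y) (q : Walk G y z)
    (hv : v ∈ q.support) :
    ∃ u : Walk G v z, u.support <:+ q.support ∧ u.marked ⊆ q.marked ∧
      (u.isNil = false → u.headAtStart = false → (v, false) ∈ (cons e q).marked) := by
  induction q using induction_cons generalizing x with
  | nil y =>
    obtain rfl : v = y := by simpa using hv
    exact ⟨nil v, List.suffix_refl _, List.Subset.refl _, by simp⟩
  | @cons y y' z e' q ih =>
    by_cases hvy : v = y
    · subst hvy
      refine ⟨cons e' q, List.suffix_refl _, List.Subset.refl _, fun _ hhead => ?_⟩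
      simp [marked_cons (w := cons e' q), hhead]
    · obtain ⟨u, hsuf, hsub, htail⟩ := ih e' (by simpa [hvy] using hv)
      have hmarked : (cons e' q).marked ⊆ (cons e (cons e' q)).marked := by
        simp [marked_cons (w := cons e' q)]
      refine ⟨u, hsuf.trans (by simp), List.Subset.trans hsub (by simp [marked_cons]),
        fun hu hhead => hmarked (htail hu hhead)⟩

/-- Following the walk forward from its start `b`, which is entered by an arrowhead: as long as the
edges point forward we stay among descendants of `a`, and acyclicity forbids reaching `a` this way,
so we must meet an active collider, which lies in the ancestral closure of `S`. -/
lemma Active.mem_ancestralClosure (hG : G.Acyclic) {a b z : V} {q : Walk G b z}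
    (hq : q.Active S) (hstart : q.ActiveAtStart S true) (hab : G.Anc a b) (ha : a ∈ q.support) :
    a ∈ G.ancestralClosure S := by
  induction q using induction_cons with
  | nil b =>
    obtain rfl : a = b := by simpa using ha
    exact absurd hab (hG a)
  | @cons b c z e q ih =>
    obtain rfl | ha := List.mem_cons.mp (support_cons e q ▸ ha)
    · exact absurd hab (hG a)
    rw [active_cons_iff] at hq
    cases hsrc : e.headAtSrc
    · refine ih hq.2 ?_ (hab.tail (e.dir_of_headAtSrc_eq_false hsrc)) ha
      simpa [e.headAtTgt_eq_true_of_headAtSrc_eq_false hsrc] using hq.1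
    · exact mem_ancestralClosure_of_anc hab (by simpa [hsrc] using hstart (isNil_cons e q))

theorem exists_isPath_active (hG : G.Acyclic) {a z : V} (w : Walk G a z) (hw : w.Active S) :
    ∃ p : Walk G a z, p.IsPath ∧ p.Active S ∧
      ∀ arrow, w.ActiveAtStart S arrow → p.ActiveAtStart S arrow := by
  induction w using induction_cons with
  | nil x => exact ⟨nil x, by simp [IsPath], active_nil, fun _ _ => activeAtStart_nil⟩
  | @cons x y z e w ih =>
    rw [active_cons_iff] at hw
    obtain ⟨q, hq, hqA, hqS⟩ := ih hw.2
    have hcons : (cons e q).Active S := active_cons_iff.2 ⟨hqS _ hw.1, hqA⟩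
    by_cases hx : x ∈ q.support
    · obtain ⟨u, hsuf, hsub, htail⟩ := exists_suffix_of_mem_support e q hx
      refine ⟨u, hq.sublist hsuf.sublist, fun p hp => hqA p (hsub hp), ?_⟩
      intro arrow hstart hu
      rw [activeAtStart_cons] at hstart
      cases hhead : u.headAtStart
      · simpa using hcons _ (htail hu hhead)
      cases arrow
      · simpa using hstart
      cases hsrc : e.headAtSrc
      · have hqstart : q.ActiveAtStart S true := by
          simpa [e.headAtTgt_eq_true_of_headAtSrc_eq_false hsrc] using hqS _ hw.1
        simpa using hqA.mem_ancestralClosure hG hqstart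
          (.single (e.dir_of_headAtSrc_eq_false hsrc)) hx
      · simpa [hsrc] using hstart
    · refine ⟨cons e q, ?_, hcons, fun _ h => by simpa using h⟩
      simpa [IsPath] using ⟨hx, hq⟩

end Walk

section Projection

variable {I : Type} {π : V → I} {GC : DMG I} {𝒵 : Set I}

lemma CompatibleWith.reflTransGen_map (hc : G.CompatibleWith π GC) {v d : V}
    (h : Relation.ReflTransGen G.dir v d) : Relation.ReflTransGen GC.dir (π v) (π d) := by
  refine h.lift' π fun x y hxy => ?_
  show Relation.ReflTransGen GC.dir (π x) (π y)
  by_cases hπ : π x = π y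
  · exact hπ ▸ .refl
  · exact .single ((hc.1 _ _).2 ⟨hπ, x, y, rfl, rfl, hxy⟩)

lemma CompatibleWith.activeAt_map (hc : G.CompatibleWith π GC) {v : V} :
    ∀ {c : Bool}, G.ActiveAt (π ⁻¹' 𝒵) v c → GC.ActiveAt 𝒵 (π v) c
  | false, h => h
  | true, ⟨d, hd, hvd⟩ => ⟨π d, hd, hc.reflTransGen_map hvd⟩

def Edge.map (hc : G.CompatibleWith π GC) {x y : V} (hπ : π x ≠ π y) :
    Edge G x y → Edge GC (π x) (π y)
  | .fwd h => .fwd ((hc.1 _ _).2 ⟨hπ, x, y, rfl, rfl, h⟩)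
  | .bwd h => .bwd ((hc.1 _ _).2 ⟨hπ.symm, y, x, rfl, rfl, h⟩)
  | .bi h => .bi ((hc.2 _ _).2 ⟨hπ, x, y, rfl, rfl, h⟩)

@[simp] lemma Edge.headAtSrc_map (hc : G.CompatibleWith π GC) {x y : V} (hπ : π x ≠ π y)
    (e : Edge G x y) : (e.map hc hπ).headAtSrc = e.headAtSrc := by
  cases e <;> rfl

@[simp] lemma Edge.headAtTgt_map (hc : G.CompatibleWith π GC) {x y : V} (hπ : π x ≠ π y)
    (e : Edge G x y) : (e.map hc hπ).headAtTgt = e.headAtTgt := by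
  cases e <;> rfl

/-- `W` contracts each maximal segment of `w` inside one cluster. A segment entered and left
through arrowheads contains a collider of `w` (where it first stops following forward edges), whose
membership in the ancestral closure passes to the cluster; a segment left or entered through a tail
contains a non-collider of `w`, which is not in `π ⁻¹' 𝒵`, hence neither is the cluster. -/
theorem Walk.exists_map_active (hc : G.CompatibleWith π GC) {a z : V} (w : Walk G a z)
    (hw : w.Active (π ⁻¹' 𝒵)) :
    ∃ W : Walk GC (π a) (π z), W.Active 𝒵 ∧
      ∀ arrow, w.ActiveAtStart (π ⁻¹' 𝒵) arrow → W.ActiveAtStart 𝒵 arrow := by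
  induction w using Walk.induction_cons with
  | nil x => exact ⟨.nil _, Walk.active_nil, fun _ _ => Walk.activeAtStart_nil⟩
  | @cons x y z e w ih =>
    rw [Walk.active_cons_iff] at hw
    obtain ⟨W, hWA, hWS⟩ := ih hw.2
    have hWe := hWS _ hw.1
    by_cases hπ : π x = π y
    · rw [hπ]
      refine ⟨W, hWA, fun arrow hstart hW => ?_⟩
      rw [Walk.activeAtStart_cons] at hstart
      cases hhead : W.headAtStart
      · simpa [hhead] using hWe hW
      cases arrow
      · simpa [hπ] using hc.activeAt_map hstart
      cases hsrc : e.headAtSrc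
      · simpa [hhead, e.headAtTgt_eq_true_of_headAtSrc_eq_false hsrc] using hWe hW
      · simpa [hπ, hsrc] using hc.activeAt_map hstart
    · refine ⟨.cons (e.map hc hπ) W, Walk.active_cons_iff.2 ⟨by simpa using hWe, hWA⟩, ?_⟩
      intro arrow hstart
      simpa using hc.activeAt_map ((Walk.activeAtStart_cons e w).1 hstart)

end Projection

lemma MSep.not_active (hG : G.Acyclic) {S : Set V} {x y : V} (h : G.MSep x y S)
    (w : Walk G x y) : ¬ w.Active S := fun hw =>
  let ⟨p, hp, hpA, _⟩ := w.exists_isPath_active hG hw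
  (p.blocked_iff_not_active).1 (h p hp) hpA

theorem MSep.of_compatibleWith {I : Type} {π : V → I} {GC : DMG I} (hGC : GC.Acyclic)
    (hc : G.CompatibleWith π GC) {𝒵 : Set I} {x y : V} (h : GC.MSep (π x) (π y) 𝒵) :
    G.MSep x y (π ⁻¹' 𝒵) := fun w _ =>
  (w.blocked_iff_not_active).2 fun hw =>
    let ⟨W, hW, _⟩ := w.exists_map_active hc hw
    h.not_active hGC W hW

end DMG

open DMG in
theorem stmt5_general {V I : Type}
    (π : V → I)
    (GC : DMG I) (hadm : GC.Acyclic)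
    (𝒳 𝒴 𝒵 : Set I)
    (hsep : GC.MSepSets 𝒳 𝒴 𝒵) :
    ∀ G : DMG V, G.Acyclic → G.CompatibleWith π GC →
      G.MSepSets (π ⁻¹' 𝒳) (π ⁻¹' 𝒴) (π ⁻¹' 𝒵) :=
  fun _ _ hc x hx y hy => MSep.of_compatibleWith hadm hc (hsep (π x) hx (π y) hy)

open DMG in
/-- Soundness of d-separation in C-DAGs: if sets of clusters `𝒳` and
`𝒴` are m-separated by `𝒵` in the C-ADMG `GC`, then in every compatible ADMG `G`,
the unions of the clusters in `𝒳` and `𝒴` are m-separated by the union of `𝒵`. -/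
theorem stmt5 {V I : Type} [Fintype V]
    (π : V → I) (hsurj : Function.Surjective π)
    (GC : DMG I) (hadm : GC.Acyclic)
    (𝒳 𝒴 𝒵 : Set I)
    (hXY : Disjoint 𝒳 𝒴) (hXZ : Disjoint 𝒳 𝒵) (hYZ : Disjoint 𝒴 𝒵)
    (hsep : GC.MSepSets 𝒳 𝒴 𝒵) :
    ∀ G : DMG V, G.Acyclic → G.CompatibleWith π GC →
      G.MSepSets (π ⁻¹' 𝒳) (π ⁻¹' 𝒴) (π ⁻¹' 𝒵) :=
  stmt5_general π GC hadm 𝒳 𝒴 𝒵 hsep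
end

section
/- (TBK is representable as a C-DAG.) Let T_1, …, T_m be an ordered partition of a finite set V. A DAG G over V satisfies the tiered background knowledge with respect to T_1, …, T_m if and only if G is compatible with some C-DAG G_C whose vertex set is {T_1, …, T_m}, whose every directed edge T_i → T_j satisfies i < j, and which has no bidirected edges. -/
/-- Tiered background knowledge with respect to the ordered partition of `V` into
the fibers of `π : V → Fin m`: for any two vertices in tiers `i < j`, either the
first is an ancestor of the second or they are not adjacent. -/
def TBK {V : Type} {m : ℕ} (G : DMG V) (π : V → Fin m) : Prop :=
  ∀ a b, π a < π b → (G.Anc a b ∨ ¬ G.Adj a b)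

open DMG in
/-- TBK is representable as a C-DAG: a DAG `G` satisfies tiered
background knowledge w.r.t. the tiers `π : V → Fin m` iff `G` is compatible with
some C-DAG on the tiers all of whose directed edges go from lower to higher tiers
and which has no bidirected edges. -/
theorem stmt9 {V : Type} [Fintype V] {m : ℕ}
    (π : V → Fin m) (hsurj : Function.Surjective π)
    (G : DMG V) (hG : G.IsDAG) :
    TBK G π ↔
      ∃ GC : DMG (Fin m), (∀ i j, GC.dir i j → i < j) ∧ GC.NoBidir ∧
        G.CompatibleWith π GC := by
  constructor
  · intro htbk
    refine ⟨G.clusterGraph π, ?_, ?_, fun i j => Iff.rfl, fun i j => Iff.rfl⟩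
    · rintro i j ⟨hne, x, y, hx, hy, hd⟩
      subst hx; subst hy
      rcases lt_or_gt_of_ne hne with h | h
      · exact h
      · exfalso
        rcases htbk y x h with hanc | hnadj
        · exact hG.1 x (Relation.TransGen.head hd hanc)
        · exact hnadj (Or.inr (Or.inl hd))
    · rintro i j ⟨hne, x, y, hx, hy, hb⟩
      exact hG.2 x y hb
  · rintro ⟨GC, hlt, hnb, hdir, hbidir⟩ a b hab
    by_cases hadj : G.Adj a b
    · rcases hadj with hd | hd | hb
      · exact Or.inl (Relation.TransGen.single hd)
      · exfalso
        have : GC.dir (π b) (π a) :=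
          (hdir _ _).2 ⟨ne_of_gt hab, b, a, rfl, rfl, hd⟩
        exact absurd (hlt _ _ this) (not_lt_of_gt hab)
      · exact absurd hb (hG.2 a b)
    · exact Or.inr hadj
end

section
/- (C-DAGs are strictly more flexible than TBK.) Let V = {X_1, X_2, X_3} and let G_C be the C-DAG over the singleton partition C_k = {X_k} (k = 1, 2, 3) whose only edges are C_1 → C_3 and C_2 → C_3. Then there is no ordered partition T_1, …, T_m of V such that the set of DAGs over V satisfying the tiered background knowledge with respect to T_1, …, T_m is equal to the set of DAGs over V compatible with G_C. -/
open DMG in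
/-- The C-DAG over the singleton partition of `{X₁, X₂, X₃}` whose only edges are
`C₁ → C₃` and `C₂ → C₃`. -/
def GC10 : DMG (Fin 3) where
  dir i j := (i = 0 ∧ j = 2) ∨ (i = 1 ∧ j = 2)
  bidir _ _ := False
  bidir_symm := fun _ _ h => h.elim
  dir_ne := by rintro x y (⟨hx, hy⟩ | ⟨hx, hy⟩) <;> subst hx <;> subst hy <;> decide
  bidir_ne := fun _ _ h => h.elim

open DMG in
/-- C-DAGs are strictly more flexible than TBK: there is no ordered
partition of `{X₁, X₂, X₃}` into tiers such that the class of DAGs satisfying the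
corresponding tiered background knowledge equals the class of DAGs compatible with
the C-DAG `C₁ → C₃ ← C₂` over the singleton partition. -/
theorem stmt10 :
    ¬ ∃ (m : ℕ) (π : Fin 3 → Fin m), Function.Surjective π ∧
      ∀ G : DMG (Fin 3), G.IsDAG →
        (TBK G π ↔ G.CompatibleWith (id : Fin 3 → Fin 3) GC10) := by

  rintro ⟨m, π, -, h⟩
  -- the empty graph is a DAG satisfying TBK but not compatible with GC10
  set Gemp : DMG (Fin 3) :=
    { dir := fun _ _ => False
      bidir := fun _ _ => False
      bidir_symm := fun _ _ h => h.elim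
      dir_ne := fun _ _ h => h.elim
      bidir_ne := fun _ _ h => h.elim } with hG
  have hdag : Gemp.IsDAG := by
    constructor
    · intro x hx
      cases hx with
      | single h => exact h
      | tail _ h => exact h
    · intro x y hb; exact hb
  have htbk : TBK Gemp π := by
    intro a b _
    right
    rintro (h | h | h) <;> exact h
  have hcomp := (h Gemp hdag).mp htbk
  have := (hcomp.1 0 2).mp (Or.inl ⟨rfl, rfl⟩)
  obtain ⟨-, x, y, -, -, hd⟩ := this
  exact hd
end

section
/- (Minimal neighbor separator is contained in the parents.) Let G be a DAG over a finite set V, let X ∈ V, and let Y ∈ V be a vertex that is not a descendant of X, not adjacent to X, and distinct from X. Then X and Y are d-separated in G by the set pa_X of parents of X; moreover, there exists a unique inclusion-minimal subset S of the neighbors of X (parents and children of X) such that X and Y are d-separated by S in G, and this minimal set S satisfies S ⊆ pa_X. -/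
namespace DMG

variable {V : Type}

namespace Walk

variable {G : DMG V}

lemma support_length_pos {a b : V} (w : Walk G a b) : 0 < w.support.length := by
  cases w <;> simp [support]

lemma isNil_start_eq {a b : V} (w : Walk G a b) (h : w.isNil = true) : a = b := by
  cases w <;> simp [isNil] at h ⊢

lemma not_isNil_of_headAtStart {a b : V} (w : Walk G a b) (h : w.headAtStart = true) :
    w.isNil = false := by
  cases w <;> simp [isNil, headAtStart] at h ⊢

end Walk

/-- The "forced" set: parents `p` of `X` which start a path to `Y` whose internal
non-colliders (other than `p`) avoid the neighbors of `X` and whose colliders are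
opened by forced vertices. -/
inductive Forced (G : DMG V) (X Y : V) : V → Prop
  | mk (p : V) (hp : G.dir p X) (rho : Walk G p Y)
      (hpath : (Walk.bwd hp rho).IsPath)
      (hnon : ∀ pr ∈ rho.marked, pr.2 = false → ¬(G.dir pr.1 X ∨ G.dir X pr.1))
      (f : V → V)
      (hf1 : ∀ pr ∈ rho.marked, pr.2 = true → (f pr.1 = pr.1 ∨ G.Anc pr.1 (f pr.1)))
      (hf2 : ∀ pr ∈ rho.marked, pr.2 = true → Forced G X Y (f pr.1)) :
      Forced G X Y p

lemma Forced.dir_start {G : DMG V} {X Y p : V} (h : Forced G X Y p) : G.dir p X := by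
  cases h; assumption

section Lemmas

variable {G : DMG V} {X Y : V}
variable (hac : G.Acyclic) (hnb : G.NoBidir) (hnd : ¬ G.Anc X Y)

include hac hnb hnd in
/-- Descending lemma: a walk from a descendant `z` of `X` to `Y` either starts with an
arrowhead at `z`, or contains a collider which is closed for any set of parents of `X`. -/
lemma down (S : Set V) (hS : ∀ s ∈ S, G.dir s X) :
    ∀ (n : ℕ) (z : V) (w : Walk G z Y), w.support.length ≤ n → G.Anc X z →
      w.headAtStart = true ∨
      ∃ pr ∈ w.marked, pr.2 = true ∧ pr.1 ∉ S ∧ ∀ d, G.Anc pr.1 d → d ∉ S := by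
  intro n
  induction n with
  | zero =>
    intro z w hlen _
    exact absurd hlen (Nat.not_le.mpr w.support_length_pos)
  | succ n ih =>
    intro z w hlen hz
    cases w with
    | nil => exact absurd hz hnd
    | bwd h rest => exact Or.inl rfl
    | bi h rest => exact absurd h (hnb _ _)
    | fwd h rest =>
      rename_i y'
      right
      have hz' : G.Anc X y' := hz.tail h
      have hlen' : rest.support.length ≤ n := by
        simp [Walk.support] at hlen; omega
      rcases ih y' rest hlen' hz' with hh | ⟨pr, hmem, hpr⟩
      · have hnn : rest.isNil = false := rest.not_isNil_of_headAtStart hh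
        refine ⟨(y', rest.headAtStart), ?_, hh, ?_, ?_⟩
        · simp [Walk.marked, hnn]
        · intro hy'S
          exact hac X (hz'.tail (hS _ hy'S))
        · intro d hd hdS
          exact hac X ((hz'.trans hd).tail (hS _ hdS))
      · exact ⟨pr, by simp [Walk.marked]; right; exact hmem, hpr⟩

include hac hnb hnd in
/-- Any path starting with an edge out of `X` is blocked by any set of parents of `X`. -/
lemma fwd_blocked (S : Set V) (hS : ∀ s ∈ S, G.dir s X) {c : V}
    (h : G.dir X c) (rest : Walk G c Y) : (Walk.fwd h rest).Blocked S := by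
  rcases down hac hnb hnd S hS rest.support.length c rest le_rfl (Relation.TransGen.single h)
    with hh | ⟨pr, hm, h2, hF, hd⟩
  · have hnn : rest.isNil = false := rest.not_isNil_of_headAtStart hh
    refine ⟨(c, rest.headAtStart), by simp [Walk.marked, hnn], Or.inr ⟨hh, ?_, ?_⟩⟩
    · intro hcS
      exact hac X ((Relation.TransGen.single h).tail (hS _ hcS))
    · intro d hcd hdS
      exact hac X (((Relation.TransGen.single h).trans hcd).tail (hS _ hdS))
  · exact ⟨pr, by simp [Walk.marked]; right; exact hm, Or.inr ⟨h2, hF, hd⟩⟩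

include hac hnb hnd in
/-- Key structural lemma: on a path to `Y` which is "good" with respect to the forced set
(non-colliders not forced, colliders opened by forced vertices), and whose start has an
ancestor-invariant, no internal non-collider is a neighbor of `X` — provided all strictly
shorter paths from `X` to `Y` are blocked by the forced set. -/
lemma aux :
    ∀ (n : ℕ) (u : V) (rho : Walk G u Y),
      rho.support.length ≤ n →
      rho.support.Nodup → X ∉ rho.support →
      (rho.headAtStart = true → G.Anc u X) →
      (∀ pr ∈ rho.marked,
        (pr.2 = false → ¬ Forced G X Y pr.1) ∧
        (pr.2 = true → Forced G X Y pr.1 ∨ ∃ d, G.Anc pr.1 d ∧ Forced G X Y d)) →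
      (∀ pi' : Walk G X Y, pi'.IsPath → pi'.support.length ≤ rho.support.length →
        pi'.Blocked {v | Forced G X Y v}) →
      ∀ pr ∈ rho.marked, pr.2 = false → ¬(G.dir pr.1 X ∨ G.dir X pr.1) := by
  intro n
  induction n with
  | zero =>
    intro u rho hlen
    exact absurd hlen (Nat.not_le.mpr rho.support_length_pos)
  | succ n ih =>
    intro u rho hlen hnodup hX hAnc hgood MIH pr hpr hflag
    cases rho with
    | nil => simp [Walk.marked] at hpr
    | bi h rest => exact absurd h (hnb _ _)
    | fwd h rest =>
      rename_i v
      -- h : G.dir u v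
      have hsupp : (Walk.fwd h rest).support = u :: rest.support := rfl
      have hnodup' : rest.support.Nodup := (List.nodup_cons.mp (hsupp ▸ hnodup)).2
      have hX' : X ∉ rest.support := fun hmem => hX (by rw [hsupp]; exact List.mem_cons_of_mem _ hmem)
      have hlen' : rest.support.length ≤ n := by
        rw [hsupp] at hlen; simp at hlen; omega
      have hmarked : (Walk.fwd h rest).marked
          = (if rest.isNil then [] else [(v, rest.headAtStart)]) ++ rest.marked := rfl
      rw [hmarked] at hpr
      rcases List.mem_append.mp hpr with hA | hB
      · -- head pair
        cases hnil : rest.isNil with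
        | true => rw [hnil] at hA; simp at hA
        | false =>
          rw [hnil] at hA; simp at hA
          subst hA
          have hhs : rest.headAtStart = false := hflag
          have hprmem : (v, false) ∈ (Walk.fwd h rest).marked := by
            rw [hmarked, hnil]; simp [← hhs]
          show ¬(G.dir v X ∨ G.dir X v)
          rintro (hvP | hvC)
          · -- v is a parent of X: reroute, shorter path, contradiction
            have hpath' : (Walk.bwd hvP rest).IsPath := by
              have : (Walk.bwd hvP rest).support = X :: rest.support := rfl
              rw [Walk.IsPath, this]
              exact List.nodup_cons.mpr ⟨hX', hnodup'⟩
            have hlen'' : (Walk.bwd hvP rest).support.length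
                ≤ (Walk.fwd h rest).support.length := by
              show (X :: rest.support).length ≤ (u :: rest.support).length
              simp
            obtain ⟨qr, hqmem, hq⟩ := MIH _ hpath' hlen''
            have hqmem' : qr = (v, false) ∨ qr ∈ rest.marked := by
              have : (Walk.bwd hvP rest).marked
                  = (if rest.isNil then [] else [(v, false)]) ++ rest.marked := rfl
              rw [this, hnil] at hqmem
              simpa using hqmem
            rcases hqmem' with hq1 | hq2
            · subst hq1
              rcases hq with ⟨_, hvF⟩ | ⟨hff, _⟩
              · exact (hgood _ hprmem).1 rfl hvF
              · simp at hff
            · have hg := hgood qr (by rw [hmarked]; exact List.mem_append_right _ hq2)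
              rcases hq with ⟨hf0, hqF⟩ | ⟨hf1, hqnF, hqcl⟩
              · exact hg.1 hf0 hqF
              · rcases hg.2 hf1 with hin | ⟨d, hd, hdF⟩
                · exact hqnF hin
                · exact hqcl d hd hdF
          · -- v is a child of X: descend, contradiction
            rcases down hac hnb hnd {w | Forced G X Y w} (fun s hs => Forced.dir_start hs)
                rest.support.length v rest le_rfl (Relation.TransGen.single hvC)
              with hh | ⟨qr, hqm, hq2, hqF, hqd⟩
            · rw [hhs] at hh; simp at hh
            · have hg := hgood qr (by rw [hmarked]; exact List.mem_append_right _ hqm)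
              rcases hg.2 hq2 with hin | ⟨d, hd, hdF⟩
              · exact hqF hin
              · exact hqd d hd hdF
      · -- tail pair: recurse
        have hAnc' : rest.headAtStart = true → G.Anc v X := by
          intro hh
          have hnn : rest.isNil = false := rest.not_isNil_of_headAtStart hh
          have hvm : (v, true) ∈ (Walk.fwd h rest).marked := by
            rw [hmarked, hnn]; simp [hh]
          rcases (hgood _ hvm).2 rfl with hin | ⟨d, hd, hdF⟩
          · exact Relation.TransGen.single hin.dir_start
          · exact hd.tail hdF.dir_start
        have hgood' : ∀ qr ∈ rest.marked,
            (qr.2 = false → ¬ Forced G X Y qr.1) ∧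
            (qr.2 = true → Forced G X Y qr.1 ∨ ∃ d, G.Anc qr.1 d ∧ Forced G X Y d) :=
          fun qr hq => hgood qr (by rw [hmarked]; exact List.mem_append_right _ hq)
        have MIH' : ∀ pi' : Walk G X Y, pi'.IsPath →
            pi'.support.length ≤ rest.support.length → pi'.Blocked {v | Forced G X Y v} := by
          intro pi' hp hl
          exact MIH pi' hp (by rw [hsupp]; simp; omega)
        exact ih v rest hlen' hnodup' hX' hAnc' hgood' MIH' pr hB hflag
    | bwd h rest =>
      rename_i v
      -- h : G.dir v u
      have hAncu : G.Anc u X := hAnc rfl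
      have hAncv : G.Anc v X := Relation.TransGen.head h hAncu
      have hsupp : (Walk.bwd h rest).support = u :: rest.support := rfl
      have hnodup' : rest.support.Nodup := (List.nodup_cons.mp (hsupp ▸ hnodup)).2
      have hX' : X ∉ rest.support := fun hmem => hX (by rw [hsupp]; exact List.mem_cons_of_mem _ hmem)
      have hlen' : rest.support.length ≤ n := by
        rw [hsupp] at hlen; simp at hlen; omega
      have hmarked : (Walk.bwd h rest).marked
          = (if rest.isNil then [] else [(v, false)]) ++ rest.marked := rfl
      rw [hmarked] at hpr
      rcases List.mem_append.mp hpr with hA | hB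
      · cases hnil : rest.isNil with
        | true => rw [hnil] at hA; simp at hA
        | false =>
          rw [hnil] at hA; simp at hA
          subst hA
          have hprmem : (v, false) ∈ (Walk.bwd h rest).marked := by
            rw [hmarked, hnil]; simp
          show ¬(G.dir v X ∨ G.dir X v)
          rintro (hvP | hvC)
          · have hpath' : (Walk.bwd hvP rest).IsPath := by
              have : (Walk.bwd hvP rest).support = X :: rest.support := rfl
              rw [Walk.IsPath, this]
              exact List.nodup_cons.mpr ⟨hX', hnodup'⟩
            have hlen'' : (Walk.bwd hvP rest).support.length
                ≤ (Walk.bwd h rest).support.length := by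
              show (X :: rest.support).length ≤ (u :: rest.support).length
              simp
            obtain ⟨qr, hqmem, hq⟩ := MIH _ hpath' hlen''
            have hqmem' : qr = (v, false) ∨ qr ∈ rest.marked := by
              have : (Walk.bwd hvP rest).marked
                  = (if rest.isNil then [] else [(v, false)]) ++ rest.marked := rfl
              rw [this, hnil] at hqmem
              simpa using hqmem
            rcases hqmem' with hq1 | hq2
            · subst hq1
              rcases hq with ⟨_, hvF⟩ | ⟨hff, _⟩
              · exact (hgood _ hprmem).1 rfl hvF
              · simp at hff
            · have hg := hgood qr (by rw [hmarked]; exact List.mem_append_right _ hq2)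
              rcases hq with ⟨hf0, hqF⟩ | ⟨hf1, hqnF, hqcl⟩
              · exact hg.1 hf0 hqF
              · rcases hg.2 hf1 with hin | ⟨d, hd, hdF⟩
                · exact hqnF hin
                · exact hqcl d hd hdF
          · exact hac X (Relation.TransGen.head hvC hAncv)
      · have hgood' : ∀ qr ∈ rest.marked,
            (qr.2 = false → ¬ Forced G X Y qr.1) ∧
            (qr.2 = true → Forced G X Y qr.1 ∨ ∃ d, G.Anc qr.1 d ∧ Forced G X Y d) :=
          fun qr hq => hgood qr (by rw [hmarked]; exact List.mem_append_right _ hq)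
        have MIH' : ∀ pi' : Walk G X Y, pi'.IsPath →
            pi'.support.length ≤ rest.support.length → pi'.Blocked {v | Forced G X Y v} := by
          intro pi' hp hl
          exact MIH pi' hp (by rw [hsupp]; simp; omega)
        exact ih v rest hlen' hnodup' hX' (fun _ => hAncv) hgood' MIH' pr hB hflag

include hac hnb hnd in
/-- The forced set d-separates `X` and `Y`. -/
lemma main (hne : Y ≠ X) (hnadj : ¬ G.Adj X Y) :
    ∀ (n : ℕ) (pi : Walk G X Y), pi.support.length ≤ n → pi.IsPath →
      pi.Blocked {v | Forced G X Y v} := by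
  intro n
  induction n with
  | zero =>
    intro pi hlen _
    exact absurd hlen (Nat.not_le.mpr pi.support_length_pos)
  | succ n ih =>
    intro pi hlen hpath
    cases pi with
    | nil => exact absurd rfl hne
    | bi h rest => exact absurd h (hnb _ _)
    | fwd h rest =>
      exact fwd_blocked hac hnb hnd {v | Forced G X Y v}
        (fun s hs => Forced.dir_start hs) h rest
    | bwd hp rest =>
      rename_i p
      by_contra hblk
      have hsupp : (Walk.bwd hp rest).support = X :: rest.support := rfl
      have hpath' : (X :: rest.support).Nodup := by
        rw [Walk.IsPath, hsupp] at hpath; exact hpath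
      have hnodup : rest.support.Nodup := (List.nodup_cons.mp hpath').2
      have hXmem : X ∉ rest.support := (List.nodup_cons.mp hpath').1
      have hmarked : (Walk.bwd hp rest).marked
          = (if rest.isNil then [] else [(p, false)]) ++ rest.marked := rfl
      have hgood : ∀ pr ∈ rest.marked,
          (pr.2 = false → ¬ Forced G X Y pr.1) ∧
          (pr.2 = true → Forced G X Y pr.1 ∨ ∃ d, G.Anc pr.1 d ∧ Forced G X Y d) := by
        intro pr hm
        have hm' : pr ∈ (Walk.bwd hp rest).marked := by
          rw [hmarked]; exact List.mem_append_right _ hm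
        constructor
        · intro hf hF
          exact hblk ⟨pr, hm', Or.inl ⟨hf, hF⟩⟩
        · intro ht
          by_contra hcon
          push_neg at hcon
          refine hblk ⟨pr, hm', Or.inr ⟨ht, hcon.1, ?_⟩⟩
          intro d hd hdF
          exact hcon.2 d hd hdF
      have hlen' : rest.support.length ≤ n := by
        rw [hsupp] at hlen; simp at hlen; omega
      have MIH : ∀ pi' : Walk G X Y, pi'.IsPath →
          pi'.support.length ≤ rest.support.length → pi'.Blocked {v | Forced G X Y v} := by
        intro pi' hp hl
        exact ih pi' (hl.trans hlen') hp
      have hnon := aux hac hnb hnd rest.support.length p rest le_rfl hnodup hXmem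
        (fun _ => Relation.TransGen.single hp) hgood MIH
      -- build the forced witness
      have hex : ∀ pr ∈ rest.marked, pr.2 = true →
          ∃ d, (d = pr.1 ∨ G.Anc pr.1 d) ∧ Forced G X Y d := by
        intro pr hm ht
        rcases (hgood pr hm).2 ht with hin | ⟨d, hd, hdF⟩
        · by_contra hcon
          push_neg at hcon
          exact (hcon pr.1 (Or.inl rfl)) hin
        · exact ⟨d, Or.inr hd, hdF⟩
      classical
      set f : V → V := fun w =>
        if hw : ∃ d, (d = w ∨ G.Anc w d) ∧ Forced G X Y d then hw.choose else w with hf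
      have hFp : Forced G X Y p := by
        refine Forced.mk p hp rest hpath hnon f ?_ ?_
        · intro pr hm ht
          have hw := hex pr hm ht
          have := hw.choose_spec
          simp only [hf, dif_pos hw]
          rcases this.1 with he | ha
          · exact Or.inl he
          · exact Or.inr ha
        · intro pr hm ht
          have hw := hex pr hm ht
          have := hw.choose_spec
          simp only [hf, dif_pos hw]
          exact this.2
      have hnn : rest.isNil = false := by
        cases hni : rest.isNil with
        | false => rfl
        | true =>
          have hpY : p = Y := rest.isNil_start_eq hni
          exact absurd (Or.inr (Or.inl (hpY ▸ hp))) hnadj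
      exact hblk ⟨(p, false), by rw [hmarked, hnn]; simp, Or.inl ⟨rfl, hFp⟩⟩

include hac hnb hnd in
/-- The parents of `X` d-separate `X` and `Y`. -/
lemma msep_parents (hne : Y ≠ X) (hnadj : ¬ G.Adj X Y) :
    G.MSep X Y {v | G.dir v X} := by
  intro pi hpath
  cases pi with
  | nil => exact absurd rfl hne
  | bi h rest => exact absurd h (hnb _ _)
  | fwd h rest => exact fwd_blocked hac hnb hnd {v | G.dir v X} (fun s hs => hs) h rest
  | bwd hp rest =>
    rename_i p
    have hnn : rest.isNil = false := by
      cases hni : rest.isNil with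
      | false => rfl
      | true =>
        have hpY : p = Y := rest.isNil_start_eq hni
        exact absurd (Or.inr (Or.inl (hpY ▸ hp))) hnadj
    have hmarked : (Walk.bwd hp rest).marked
        = (if rest.isNil then [] else [(p, false)]) ++ rest.marked := rfl
    exact ⟨(p, false), by rw [hmarked, hnn]; simp, Or.inl ⟨rfl, hp⟩⟩

/-- Every separating subset of the neighbors of `X` contains the forced set. -/
lemma forced_subset (S : Set V) (hSnb : S ⊆ {v | G.dir v X ∨ G.dir X v})
    (hsep : G.MSep X Y S) : ∀ p, Forced G X Y p → p ∈ S := by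
  intro p hF
  induction hF with
  | mk p hp rho hpath hnon f hf1 hf2 ihf =>
    by_contra hpS
    obtain ⟨pr, hm, hpr⟩ := hsep (Walk.bwd hp rho) hpath
    have hmarked : (Walk.bwd hp rho).marked
        = (if rho.isNil then [] else [(p, false)]) ++ rho.marked := rfl
    rw [hmarked] at hm
    rcases List.mem_append.mp hm with hA | hB
    · have hA' : pr = (p, false) := by
        cases hni : rho.isNil with
        | true => rw [hni] at hA; simp at hA
        | false => rw [hni] at hA; simpa using hA
      subst hA'
      rcases hpr with ⟨_, hin⟩ | ⟨hff, _⟩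
      · exact hpS hin
      · simp at hff
    · rcases hpr with ⟨hf0, hin⟩ | ⟨hft, hnS, hcl⟩
      · exact hnon pr hB hf0 (hSnb hin)
      · rcases hf1 pr hB hft with he | ha
        · exact hnS (he ▸ ihf pr hB hft)
        · exact hcl _ ha (ihf pr hB hft)

end Lemmas
end DMG

open DMG in
/-- Minimal neighbor separator is contained in the parents: if `Y` is
not a descendant of `X`, not adjacent to `X`, and distinct from `X` in a DAG `G`,
then `X` and `Y` are d-separated by the parents of `X`; moreover there is a unique
inclusion-minimal subset of the neighbors of `X` d-separating `X` from `Y`, and it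
is contained in the parents of `X`. -/
theorem stmt13 {V : Type} [Fintype V] (G : DMG V) (hG : G.IsDAG)
    (X Y : V) (hne : Y ≠ X) (hnd : ¬ G.Anc X Y) (hnadj : ¬ G.Adj X Y) :
    G.MSep X Y {v | G.dir v X} ∧
    ∃ S : Set V,
      ((S ⊆ {v | G.dir v X ∨ G.dir X v} ∧ G.MSep X Y S ∧
          ∀ S' ⊂ S, ¬ G.MSep X Y S') ∧
        S ⊆ {v | G.dir v X}) ∧
      ∀ S' : Set V,
        (S' ⊆ {v | G.dir v X ∨ G.dir X v} ∧ G.MSep X Y S' ∧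
          ∀ S'' ⊂ S', ¬ G.MSep X Y S'') → S' = S := by
  obtain ⟨hac, hnb⟩ := hG
  have hFsep : G.MSep X Y {v | Forced G X Y v} := by
    intro pi hpath
    exact main hac hnb hnd hne hnadj pi.support.length pi le_rfl hpath
  have hFP : {v | Forced G X Y v} ⊆ {v | G.dir v X} :=
    fun v hv => Forced.dir_start hv
  have hFnb : {v | Forced G X Y v} ⊆ {v | G.dir v X ∨ G.dir X v} :=
    fun v hv => Or.inl (Forced.dir_start hv)
  refine ⟨msep_parents hac hnb hnd hne hnadj, {v | Forced G X Y v},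
    ⟨⟨hFnb, hFsep, ?_⟩, hFP⟩, ?_⟩
  · intro S'' hss hsep''
    exact hss.not_subset
      (fun v hv => forced_subset S'' (hss.subset.trans hFnb) hsep'' v hv)
  · rintro S' ⟨h1, h2, h3⟩
    have hsub : {v | Forced G X Y v} ⊆ S' := fun v hv => forced_subset S' h1 h2 v hv
    by_contra hne'
    exact h3 {v | Forced G X Y v}
      (HasSubset.Subset.ssubset_of_ne hsub (fun he => hne' he.symm)) hFsep
end

section
/- (Locality of separation within a source cluster.) Let V be a finite set partitioned into two nonempty clusters C_1, C_2, and let G be a DAG over V compatible with the two-cluster C-DAG whose only edge is C_1 → C_2. Then: (a) every descendant in G of every vertex of C_2 belongs to C_2; (b) every path in G between two vertices of C_1 that contains a vertex of C_2 contains a collider lying in C_2; and consequently (c) for all X, Y ∈ C_1 and every S ⊆ C_1 \ {X, Y}, X and Y are d-separated by S in G if and only if X and Y are d-separated by S in the induced subgraph of G on C_1. -/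
open DMG in
/-- The two-cluster C-DAG whose only edge is `C₁ → C₂` (clusters indexed by `Fin 2`,
`C₁` = fiber of `0`, `C₂` = fiber of `1`). -/
def GC14 : DMG (Fin 2) where
  dir i j := i = 0 ∧ j = 1
  bidir _ _ := False
  bidir_symm := fun _ _ h => h.elim
  dir_ne := by rintro x y ⟨hx, hy⟩; subst hx; subst hy; decide
  bidir_ne := fun _ _ h => h.elim

/-! The cluster `C₁` is closed under taking ancestors in `G`, since no edge enters it from `C₂`.
Hence a path leaving `C₁` must come back against the direction of its edges, which forces a
collider in `C₂`; such a collider and all its descendants lie outside `S ⊆ C₁`, so the path is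
blocked. The remaining paths live in `C₁`, where blocking by `S` is the same in `G` and in the
induced subgraph, because the descendants in `C₁` of a vertex of `C₁` are the same in both. -/

namespace DMG

variable {V : Type} {G : DMG V} {A S : Set V}

def IsAncestorClosed (G : DMG V) (A : Set V) : Prop :=
  ∀ ⦃a b : V⦄, G.dir a b → b ∈ A → a ∈ A

namespace IsAncestorClosed

theorem mem_of_anc (hA : G.IsAncestorClosed A) {a b : V} (h : G.Anc a b) (hb : b ∈ A) :
    a ∈ A := by
  induction h using Relation.TransGen.head_induction_on with
  | single h => exact hA h hb
  | head h _ ih => exact hA h ih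

theorem anc_induce_iff (hA : G.IsAncestorClosed A) {a b : A} :
    (G.induce A).Anc a b ↔ G.Anc a b := by
  refine ⟨fun h => ?_, fun h => ?_⟩
  · induction h with
    | single h => exact .single h
    | tail _ h ih => exact .tail ih h
  · suffices ∀ a, G.Anc a b → ∀ ha : a ∈ A, (G.induce A).Anc ⟨a, ha⟩ b from this _ h a.2
    intro a h
    induction h using Relation.TransGen.head_induction_on with
    | single h => exact fun _ => .single h
    | head h hcb ih =>
      exact fun ha => .head (show (G.induce A).dir ⟨_, ha⟩ ⟨_, hA.mem_of_anc hcb b.2⟩ from h) (ih _)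

end IsAncestorClosed

theorem isAncestorClosed_of_compatibleWith {π : V → Fin 2} (hcomp : G.CompatibleWith π GC14) :
    G.IsAncestorClosed {v | π v = 0} := by
  intro a b h hb
  by_contra ha
  have : (G.clusterGraph π).dir (π a) (π b) := ⟨by rwa [hb], a, b, rfl, rfl, h⟩
  exact ha ((hcomp.1 _ _).mpr this).1

namespace Walk

theorem isNil_eq_false {x y : V} (w : Walk G x y) (h : x ≠ y) : w.isNil = false := by
  cases w
  · exact absurd rfl h
  all_goals rfl

theorem start_mem_support {x y : V} (w : Walk G x y) : x ∈ w.support := by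
  cases w <;> simp [support]

theorem exists_collider_cons {v z : V} (w : Walk G v z)
    (h : w.headAtStart = true ∨ ∃ p ∈ w.marked, p.2 = true ∧ p.1 ∉ A) (hv : v ∉ A) :
    ∃ p ∈ (v, w.headAtStart) :: w.marked, p.2 = true ∧ p.1 ∉ A := by
  rcases h with h | ⟨p, hp, hpc⟩
  · exact ⟨_, List.mem_cons_self, h, hv⟩
  · exact ⟨p, List.mem_cons_of_mem _ hp, hpc⟩

theorem marked_fwd {x v z : V} (h : G.dir x v) (w : Walk G v z) (hw : w.isNil = false) :
    (fwd h w).marked = (v, w.headAtStart) :: w.marked := by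
  simp [marked, hw]

theorem marked_bi {x v z : V} (h : G.bidir x v) (w : Walk G v z) (hw : w.isNil = false) :
    (bi h w).marked = (v, w.headAtStart) :: w.marked := by
  simp [marked, hw]

theorem headAtStart_or_exists_collider_not_mem (hA : G.IsAncestorClosed A) :
    ∀ {u y : V} (w : Walk G u y), u ∉ A → y ∈ A →
      w.headAtStart = true ∨ ∃ p ∈ w.marked, p.2 = true ∧ p.1 ∉ A
  | _, _, .nil _, hu, hy => absurd hy hu
  | _, _, .fwd (y := v) h w, hu, hy => by
    have hv : v ∉ A := fun hv => hu (hA h hv)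
    rw [marked_fwd h w (w.isNil_eq_false fun e => hv (e ▸ hy))]
    exact .inr (exists_collider_cons w (headAtStart_or_exists_collider_not_mem hA w hv hy) hv)
  | _, _, .bwd _ _, _, _ => .inl rfl
  | _, _, .bi _ _, _, _ => .inl rfl

theorem exists_collider_not_mem (hA : G.IsAncestorClosed A) :
    ∀ {x y : V} (w : Walk G x y), x ∈ A → y ∈ A → (∃ v ∈ w.support, v ∉ A) →
      ∃ p ∈ w.marked, p.2 = true ∧ p.1 ∉ A
  | _, _, .nil _, hx, _, ⟨v, hv, hvA⟩ => by simp_all [support]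
  | _, _, .fwd (y := v) h w, hx, hy, ⟨t, ht, htA⟩ => by
    by_cases hv : v ∈ A
    · obtain ⟨p, hp, hpc⟩ := exists_collider_not_mem hA w hv hy
        ⟨t, (List.mem_cons.mp ht).resolve_left fun e => htA (e ▸ hx), htA⟩
      exact ⟨p, List.mem_append_right _ hp, hpc⟩
    · rw [marked_fwd h w (w.isNil_eq_false fun e => hv (e ▸ hy))]
      exact exists_collider_cons w (headAtStart_or_exists_collider_not_mem hA w hv hy) hv
  | _, _, .bwd h w, hx, hy, ⟨t, ht, htA⟩ => by
    obtain ⟨p, hp, hpc⟩ := exists_collider_not_mem hA w (hA h hx) hy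
      ⟨t, (List.mem_cons.mp ht).resolve_left fun e => htA (e ▸ hx), htA⟩
    exact ⟨p, List.mem_append_right _ hp, hpc⟩
  | _, _, .bi (y := v) h w, hx, hy, ⟨t, ht, htA⟩ => by
    by_cases hv : v ∈ A
    · obtain ⟨p, hp, hpc⟩ := exists_collider_not_mem hA w hv hy
        ⟨t, (List.mem_cons.mp ht).resolve_left fun e => htA (e ▸ hx), htA⟩
      exact ⟨p, List.mem_append_right _ hp, hpc⟩
    · rw [marked_bi h w (w.isNil_eq_false fun e => hv (e ▸ hy))]
      exact exists_collider_cons w (headAtStart_or_exists_collider_not_mem hA w hv hy) hv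

def embed : {x y : A} → Walk (G.induce A) x y → Walk G x.val y.val
  | _, _, .nil x => .nil x.val
  | _, _, .fwd h w => .fwd h w.embed
  | _, _, .bwd h w => .bwd h w.embed
  | _, _, .bi h w => .bi h w.embed

theorem support_embed : ∀ {x y : A} (w : Walk (G.induce A) x y),
    w.embed.support = w.support.map Subtype.val
  | _, _, .nil _ => rfl
  | _, _, .fwd _ w | _, _, .bwd _ w | _, _, .bi _ w => by simp [embed, support, support_embed w]

theorem isPath_embed_iff {x y : A} (w : Walk (G.induce A) x y) : w.embed.IsPath ↔ w.IsPath := by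
  rw [IsPath, IsPath, support_embed, List.nodup_map_iff Subtype.val_injective]

theorem isNil_embed {x y : A} (w : Walk (G.induce A) x y) : w.embed.isNil = w.isNil := by
  cases w <;> rfl

theorem headAtStart_embed {x y : A} (w : Walk (G.induce A) x y) :
    w.embed.headAtStart = w.headAtStart := by
  cases w <;> rfl

theorem marked_embed : ∀ {x y : A} (w : Walk (G.induce A) x y),
    w.embed.marked = w.marked.map (Prod.map Subtype.val id)
  | _, _, .nil _ => rfl
  | _, _, .fwd _ w | _, _, .bwd _ w | _, _, .bi _ w => by
    simp [embed, marked, isNil_embed, headAtStart_embed, marked_embed w,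
      apply_ite (List.map (Prod.map Subtype.val id))]

theorem exists_embed_eq {x y : V} (w : Walk G x y) (hw : ∀ v ∈ w.support, v ∈ A)
    (hx : x ∈ A) (hy : y ∈ A) : ∃ w' : Walk (G.induce A) ⟨x, hx⟩ ⟨y, hy⟩, w'.embed = w := by
  induction w with
  | nil x => exact ⟨.nil _, rfl⟩
  | @fwd a v z h w ih | @bwd a v z h w ih | @bi a v z h w ih =>
    have hv : v ∈ A := hw v (by simp [support, start_mem_support])
    obtain ⟨w', rfl⟩ := ih (fun u hu => hw u (by simp [support, hu])) hv hy
    first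
      | exact ⟨.fwd (show (G.induce A).dir ⟨a, hx⟩ ⟨v, hv⟩ from h) w', rfl⟩
      | exact ⟨.bwd (show (G.induce A).dir ⟨v, hv⟩ ⟨a, hx⟩ from h) w', rfl⟩
      | exact ⟨.bi (show (G.induce A).bidir ⟨a, hx⟩ ⟨v, hv⟩ from h) w', rfl⟩

theorem blocked_embed_iff (hA : G.IsAncestorClosed A) (hS : S ⊆ A) {x y : A}
    (w : Walk (G.induce A) x y) : w.embed.Blocked S ↔ w.Blocked (Subtype.val ⁻¹' S) := by
  have hdesc : ∀ q : A, (∀ d, G.Anc q d → d ∉ S) ↔ ∀ d : A, (G.induce A).Anc q d → d.val ∉ S :=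
    fun q => ⟨fun h d hd => h d (hA.anc_induce_iff.mp hd),
      fun h d hd hdS => h ⟨d, hS hdS⟩ (hA.anc_induce_iff.mpr hd) hdS⟩
  simp only [Blocked, marked_embed, List.mem_map, exists_exists_and_eq_and, Prod.map_fst,
    Prod.map_snd, id, Set.mem_preimage, hdesc]

end Walk

theorem msep_iff_msep_induce (hA : G.IsAncestorClosed A) (hS : S ⊆ A) {x y : V} (hx : x ∈ A)
    (hy : y ∈ A) :
    G.MSep x y S ↔ (G.induce A).MSep ⟨x, hx⟩ ⟨y, hy⟩ (Subtype.val ⁻¹' S) := by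
  refine ⟨fun h w hw => ?_, fun h w hw => ?_⟩
  · exact (Walk.blocked_embed_iff hA hS w).mp (h _ ((Walk.isPath_embed_iff w).mpr hw))
  by_cases hleave : ∃ v ∈ w.support, v ∉ A
  · obtain ⟨p, hp, hcol, hpA⟩ := w.exists_collider_not_mem hA hx hy hleave
    exact ⟨p, hp, .inr ⟨hcol, fun hpS => hpA (hS hpS),
      fun d hd hdS => hpA (hA.mem_of_anc hd (hS hdS))⟩⟩
  · push Not at hleave
    obtain ⟨w', rfl⟩ := w.exists_embed_eq hleave hx hy
    exact (Walk.blocked_embed_iff hA hS w').mpr (h w' ((Walk.isPath_embed_iff w').mp hw))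

end DMG

open DMG in
theorem stmt14_general {V : Type}
    (π : V → Fin 2)
    (G : DMG V) (hcomp : G.CompatibleWith π GC14) :
    (∀ x y, π x = 1 → G.Anc x y → π y = 1) ∧
    (∀ x y, π x = 0 → π y = 0 → ∀ w : DMG.Walk G x y, w.IsPath →
        (∃ v ∈ w.support, π v = 1) →
        ∃ p ∈ w.marked, p.2 = true ∧ π p.1 = 1) ∧
    (∀ x y : V, ∀ hx : π x = 0, ∀ hy : π y = 0, ∀ S : Set V,
        S ⊆ {v | π v = 0} \ {x, y} →
        (G.MSep x y S ↔
          (G.induce {v | π v = 0}).MSep ⟨x, hx⟩ ⟨y, hy⟩ (Subtype.val ⁻¹' S))) := by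
  have hA := isAncestorClosed_of_compatibleWith hcomp
  have hC₂ : ∀ v, π v ≠ 0 ↔ π v = 1 := fun v => ⟨Fin.eq_one_of_ne_zero _, by simp_all⟩
  refine ⟨fun x y hx hxy => (hC₂ y).mp fun hy => (hC₂ x).mpr hx (hA.mem_of_anc hxy hy),
    fun x y hx hy w _ hleave => ?_,
    fun x y hx hy S hS => msep_iff_msep_induce hA (hS.trans Set.sdiff_subset) hx hy⟩
  obtain ⟨v, hv, hv₁⟩ := hleave
  obtain ⟨p, hp, hcol, hpA⟩ := w.exists_collider_not_mem hA hx hy ⟨v, hv, (hC₂ v).mpr hv₁⟩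
  exact ⟨p, hp, hcol, (hC₂ _).mp hpA⟩

open DMG in
/-- Locality of separation within a source cluster: if a DAG `G` is
compatible with the two-cluster C-DAG `C₁ → C₂`, then (a) descendants of vertices of
`C₂` stay in `C₂`; (b) every path between vertices of `C₁` that meets `C₂` contains
a collider in `C₂`; and (c) for `X, Y ∈ C₁` and `S ⊆ C₁ \ {X, Y}`, `X` and `Y` are
d-separated by `S` in `G` iff they are d-separated by `S` in the induced subgraph
of `G` on `C₁`. -/
theorem stmt14 {V : Type} [Fintype V]
    (π : V → Fin 2) (hsurj : Function.Surjective π)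
    (G : DMG V) (hG : G.IsDAG) (hcomp : G.CompatibleWith π GC14) :
    (∀ x y, π x = 1 → G.Anc x y → π y = 1) ∧
    (∀ x y, π x = 0 → π y = 0 → ∀ w : DMG.Walk G x y, w.IsPath →
        (∃ v ∈ w.support, π v = 1) →
        ∃ p ∈ w.marked, p.2 = true ∧ π p.1 = 1) ∧
    (∀ x y : V, ∀ hx : π x = 0, ∀ hy : π y = 0, ∀ S : Set V,
        S ⊆ {v | π v = 0} \ {x, y} →
        (G.MSep x y S ↔
          (G.induce {v | π v = 0}).MSep ⟨x, hx⟩ ⟨y, hy⟩ (Subtype.val ⁻¹' S))) :=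
  stmt14_general π G hcomp
end
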